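/- arXiv:2007.07246 — 7 statements merged into one kernel-verified Lean document; each statement's English description precedes it below -/
import Mathlib

section
/- Observational entropy with a single projective coarse-graining is at least the von Neumann entropy: S_vN(ρ) = -tr(ρ ln ρ) ≤ -∑_i p_i ln(p_i/V_i), where p_i = tr(P_i ρ) and V_i = tr(P_i). -/
open scoped Matrix ComplexOrder

/-!
Let `u_x` be an orthonormal eigenbasis of `ρ` and `q i x = ⟨u_x, P_i u_x⟩`. Then `q ≥ 0`,
`∑ i, q i x = 1`, `∑ x, q i x = V_i` and `p_i = ∑ x, q i x * ρ_x`. Jensen's inequality for the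
convex function `t ↦ t ln t`, with weights `q i x / V_i` at the points `ρ_x`, gives
`p_i ln (p_i / V_i) ≤ ∑ x, q i x * ρ_x ln ρ_x`; summing over `i` and using `∑ i, q i x = 1`
yields `∑ i, p_i ln (p_i / V_i) ≤ ∑ x, ρ_x ln ρ_x`.
-/

open Finset Real in
theorem Real.sum_mul_mul_log_div_sum_le {ι : Type*} (s : Finset ι) {w t : ι → ℝ}
    (hw : ∀ i ∈ s, 0 ≤ w i) (ht : ∀ i ∈ s, 0 ≤ t i) :
    (∑ i ∈ s, w i * t i) * log ((∑ i ∈ s, w i * t i) / ∑ i ∈ s, w i)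
      ≤ ∑ i ∈ s, w i * (t i * log (t i)) := by
  rcases (sum_nonneg hw).eq_or_lt with hW | hW
  · have hw0 : ∀ i ∈ s, w i = 0 := (sum_eq_zero_iff_of_nonneg hw).1 hW.symm
    simp [sum_eq_zero fun i hi => show w i * t i = 0 by rw [hw0 i hi, zero_mul],
      sum_eq_zero fun i hi => show w i * (t i * log (t i)) = 0 by rw [hw0 i hi, zero_mul]]
  · have jensen := convexOn_mul_log.map_centerMass_le hw hW ht
    simp only [centerMass, smul_eq_mul, Function.comp_def] at jensen
    set W := ∑ i ∈ s, w i
    calc (∑ i ∈ s, w i * t i) * log ((∑ i ∈ s, w i * t i) / W)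
        = W * ((W⁻¹ * ∑ i ∈ s, w i * t i) * log (W⁻¹ * ∑ i ∈ s, w i * t i)) := by
          rw [inv_mul_eq_div]; field_simp
      _ ≤ W * (W⁻¹ * ∑ i ∈ s, w i * (t i * log (t i))) := mul_le_mul_of_nonneg_left jensen hW.le
      _ = ∑ i ∈ s, w i * (t i * log (t i)) := by field_simp

namespace Matrix

theorem IsHermitian.posSemidef_of_mul_self_eq {n R : Type*} [Fintype n] [Ring R]
    [PartialOrder R] [StarRing R] [StarOrderedRing R] {A : Matrix n n R} (hA : A.IsHermitian)
    (h : A * A = A) : A.PosSemidef := by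
  rw [← h]
  nth_rewrite 1 [← hA.eq]
  exact posSemidef_conjTranspose_mul_self A

theorem IsHermitian.trace_mul_eq_sum_diag_mul_eigenvalues {n 𝕜 : Type*} [Fintype n]
    [DecidableEq n] [RCLike 𝕜] {A : Matrix n n 𝕜} (hA : A.IsHermitian) (B : Matrix n n 𝕜) :
    (B * A).trace = ∑ x, (star (hA.eigenvectorUnitary : Matrix n n 𝕜) * B *
      hA.eigenvectorUnitary) x x * hA.eigenvalues x := by
  conv_lhs => rw [hA.spectral_theorem, Unitary.conjStarAlgAut_apply]
  rw [← mul_assoc, ← mul_assoc, trace_mul_comm, ← mul_assoc, ← mul_assoc]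
  simp [trace, mul_diagonal]

end Matrix

theorem vN_entropy_le_obs_entropy_general
    {n : Type*} [Fintype n] [DecidableEq n]
    {ι : Type*} [Fintype ι]
    (ρ : Matrix n n ℂ) (hρ : ρ.PosSemidef)
    (P : ι → Matrix n n ℂ)
    (hherm : ∀ i, (P i).IsHermitian)
    (hproj : ∀ i, P i * P i = P i)
    (hcomp : ∑ i, P i = 1) :
    -∑ x, hρ.1.eigenvalues x * Real.log (hρ.1.eigenvalues x)
      ≤ -∑ i, (P i * ρ).trace.re * Real.log ((P i * ρ).trace.re / (P i).trace.re) := by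
  set U : Matrix n n ℂ := (hρ.1.eigenvectorUnitary : Matrix n n ℂ)
  set lam := hρ.1.eigenvalues
  set q : ι → n → ℝ := fun i x => ((star U * P i * U) x x).re
  have hq_nonneg : ∀ i x, 0 ≤ q i x := fun i x => (Complex.nonneg_iff.1
    (((hherm i).posSemidef_of_mul_self_eq (hproj i)).conjTranspose_mul_mul_same U).diag_nonneg).1
  have hq_sum_outcomes : ∀ x, ∑ i, q i x = 1 := fun x => by
    calc ∑ i, q i x = ((star U * (∑ i, P i) * U) x x).re := by
          simp [q, Finset.mul_sum, Finset.sum_mul, Matrix.sum_apply, Complex.re_sum]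
      _ = 1 := by
        rw [hcomp, mul_one, Unitary.star_mul_self_of_mem hρ.1.eigenvectorUnitary.2]
        simp
  have hq_sum_eigvecs : ∀ i, ∑ x, q i x = (P i).trace.re := fun i => by
    calc ∑ x, q i x = (star U * P i * U).trace.re := by simp [q, Matrix.trace, Complex.re_sum]
      _ = (P i).trace.re := by
        rw [Matrix.trace_mul_cycle, Unitary.mul_star_self_of_mem hρ.1.eigenvectorUnitary.2, one_mul]
  have hp : ∀ i, (P i * ρ).trace.re = ∑ x, q i x * lam x := fun i => by
    simp [hρ.1.trace_mul_eq_sum_diag_mul_eigenvalues, Complex.re_sum, q, U, lam]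
  rw [neg_le_neg_iff]
  calc ∑ i, (P i * ρ).trace.re * Real.log ((P i * ρ).trace.re / (P i).trace.re)
      ≤ ∑ i, ∑ x, q i x * (lam x * Real.log (lam x)) := Finset.sum_le_sum fun i _ => by
        rw [hp, ← hq_sum_eigvecs]
        exact Real.sum_mul_mul_log_div_sum_le _ (fun x _ => hq_nonneg i x)
          (fun x _ => hρ.eigenvalues_nonneg x)
    _ = ∑ x, lam x * Real.log (lam x) := by
        rw [Finset.sum_comm]
        simp only [← Finset.sum_mul, hq_sum_outcomes, one_mul]

/-- Observational entropy with a single projective coarse-graining is at least the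
von Neumann entropy `S_vN(ρ) = -∑ eigenvalues ρ_x ln ρ_x`. -/
theorem vN_entropy_le_obs_entropy
    {n : Type*} [Fintype n] [DecidableEq n]
    {ι : Type*} [Fintype ι]
    (ρ : Matrix n n ℂ) (hρ : ρ.PosSemidef) (hρ1 : ρ.trace = 1)
    (P : ι → Matrix n n ℂ)
    (hherm : ∀ i, (P i).IsHermitian)
    (hproj : ∀ i, P i * P i = P i)
    (horth : ∀ i j, i ≠ j → P i * P j = 0)
    (hcomp : ∑ i, P i = 1) :
    -∑ x, hρ.1.eigenvalues x * Real.log (hρ.1.eigenvalues x)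
      ≤ -∑ i, (P i * ρ).trace.re * Real.log ((P i * ρ).trace.re / (P i).trace.re) :=
  vN_entropy_le_obs_entropy_general ρ hρ P hherm hproj hcomp
end

section
/- For a POVM {Π_i}, S_C(ρ) = ln(dim H) if and only if p_i = V_i / dim H for all i, where p_i = tr(Π_i ρ) and V_i = tr(Π_i). -/
open scoped Matrix ComplexOrder

/-!
Write `p i = tr (Q i ρ)` and `V i = tr (Q i)`. Positivity makes `p` and `V` nonnegative, and
`V i = 0` forces `Q i = 0`, hence `p i = 0`; also `∑ p = 1` and `∑ V = dim H`. Then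
`ln (dim H) - S_C(ρ)` is the Kullback–Leibler divergence of `p` from the distribution `V / dim H`,
which vanishes exactly when the two distributions agree (Gibbs' inequality with its equality case).
-/

namespace Matrix

variable {n 𝕜 : Type*} [Fintype n] [RCLike 𝕜]

open scoped MatrixOrder in
theorem PosSemidef.trace_mul_nonneg [DecidableEq n] {A B : Matrix n n 𝕜} (hA : A.PosSemidef)
    (hB : B.PosSemidef) : 0 ≤ (A * B).trace := by
  obtain ⟨C, rfl⟩ := CStarAlgebra.nonneg_iff_eq_star_mul_self.mp hB.nonneg
  rw [← Matrix.mul_assoc, trace_mul_comm, ← Matrix.mul_assoc]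
  exact (hA.mul_mul_conjTranspose_same C).trace_nonneg

theorem PosSemidef.eq_zero_of_re_trace_eq_zero {A : Matrix n n 𝕜} (hA : A.PosSemidef)
    (h : RCLike.re A.trace = 0) : A = 0 := by
  refine hA.trace_eq_zero_iff.mp ?_
  rw [← RCLike.re_add_im A.trace, h, (RCLike.nonneg_iff.mp hA.trace_nonneg).2]
  simp

end Matrix

namespace InformationTheory
open Real

lemma mul_klFun_div (a : ℝ) {b : ℝ} (hb : b = 0 → a = 0) :
    b * klFun (a / b) = a * log (a / b) + b - a := by
  rcases eq_or_ne b 0 with rfl | hb0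
  · simp [hb rfl]
  · rw [klFun_apply]; field_simp

theorem sum_mul_log_div_eq_zero_iff {ι : Type*} [Fintype ι] {a b : ι → ℝ} (ha : 0 ≤ a) (hb : 0 ≤ b)
    (hab : ∀ i, b i = 0 → a i = 0) (hsum : ∑ i, a i = ∑ i, b i) :
    ∑ i, a i * log (a i / b i) = 0 ↔ a = b := by
  have hkl : ∑ i, a i * log (a i / b i) = ∑ i, b i * klFun (a i / b i) := by
    simp only [mul_klFun_div _ (hab _), Finset.sum_sub_distrib, Finset.sum_add_distrib, hsum]
    ring
  have hterm : ∀ i, b i * klFun (a i / b i) = 0 ↔ a i = b i := by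
    intro i
    rw [mul_eq_zero, klFun_eq_zero_iff (div_nonneg (ha i) (hb i))]
    rcases eq_or_ne (b i) 0 with h0 | h0
    · simp [h0, hab i h0]
    · simp [h0, div_eq_one_iff_eq h0]
  rw [hkl, Finset.sum_eq_zero_iff_of_nonneg fun i _ ↦
    mul_nonneg (hb i) (klFun_nonneg (div_nonneg (ha i) (hb i)))]
  simp [hterm, funext_iff]

lemma mul_log_div_div (a b : ℝ) {c : ℝ} (hc : 0 < c) (hab : b = 0 → a = 0) :
    a * log (a / (b / c)) = a * log (a / b) + a * log c := by
  rcases eq_or_ne a 0 with rfl | ha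
  · simp
  have hb : b ≠ 0 := mt hab ha
  rw [div_div_eq_mul_div, mul_div_right_comm, log_mul (div_ne_zero ha hb) hc.ne', mul_add]

theorem neg_sum_mul_log_div_eq_log_iff {ι : Type*} [Fintype ι] {p V : ι → ℝ} {d : ℝ}
    (hd : 0 < d) (hp : 0 ≤ p) (hV : 0 ≤ V) (hpV : ∀ i, V i = 0 → p i = 0)
    (hp1 : ∑ i, p i = 1) (hVd : ∑ i, V i = d) :
    -∑ i, p i * log (p i / V i) = log d ↔ ∀ i, p i = V i / d := by
  have hgibbs := sum_mul_log_div_eq_zero_iff hp (b := fun i ↦ V i / d)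
    (fun i ↦ div_nonneg (hV i) hd.le)
    (fun i h ↦ hpV i ((div_eq_zero_iff.mp h).resolve_right hd.ne'))
    (by rw [← Finset.sum_div, hVd, div_self hd.ne', hp1])
  simp only [mul_log_div_div _ _ hd (hpV _), Finset.sum_add_distrib, ← Finset.sum_mul, hp1,
    one_mul, funext_iff] at hgibbs
  rw [← hgibbs]
  constructor <;> intro h <;> linarith

end InformationTheory

/-- For a POVM `{Q i}`, `S_C(ρ) = ln (dim H)` iff `p i = V i / dim H` for all `i`,
with `p i = tr (Q i * ρ)`, `V i = tr (Q i)`. -/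
theorem obs_entropy_eq_log_dim_iff
    {n : Type*} [Fintype n] [DecidableEq n]
    {ι : Type*} [Fintype ι]
    (ρ : Matrix n n ℂ) (hρ : ρ.PosSemidef) (hρ1 : ρ.trace = 1)
    (Q : ι → Matrix n n ℂ)
    (hQ : ∀ i, (Q i).PosSemidef)
    (hQsum : ∑ i, Q i = 1) :
    -∑ i, (Q i * ρ).trace.re * Real.log ((Q i * ρ).trace.re / (Q i).trace.re)
        = Real.log (Fintype.card n)
      ↔ ∀ i, (Q i * ρ).trace.re = (Q i).trace.re / (Fintype.card n) := by
  have : Nonempty n := not_isEmpty_iff.mp fun _ ↦ by simp at hρ1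
  refine InformationTheory.neg_sum_mul_log_div_eq_log_iff (by positivity)
    (fun i ↦ (Complex.nonneg_iff.mp ((hQ i).trace_mul_nonneg hρ)).1)
    (fun i ↦ (Complex.nonneg_iff.mp (hQ i).trace_nonneg).1)
    (fun i h ↦ by simp [(hQ i).eq_zero_of_re_trace_eq_zero h]) ?_ ?_
  · rw [← Complex.re_sum, ← Matrix.trace_sum, ← Finset.sum_mul, hQsum, one_mul, hρ1,
      Complex.one_re]
  · rw [← Complex.re_sum, ← Matrix.trace_sum, hQsum, Matrix.trace_one, Complex.natCast_re]
end

section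
/- Equality in the non-increase theorem: with the hypotheses above, -∑_{i,j} p_{i,j} ln(p_{i,j}/V_{i,j}) = -∑_i p_i ln(p_i/V_i) if and only if p_{i,j} = (V_{i,j}/V_i) p_i for all i, j (with V_i > 0). -/
lemma pointwise_kl (a b : ℝ) (ha : 0 ≤ a) (hb : 0 ≤ b) (h0 : b = 0 → a = 0) :
    a - b ≤ a * Real.log (a / b) ∧ (a * Real.log (a / b) = a - b ↔ a = b) := by
  rcases eq_or_lt_of_le hb with hb0 | hb0
  · have ha0 : a = 0 := h0 hb0.symm
    subst ha0; rw [← hb0]; simp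
  rcases eq_or_lt_of_le ha with ha0 | ha0
  · rw [← ha0]
    constructor
    · simpa using hb0.le
    · constructor
      · intro h; simp at h; linarith
      · intro h; rw [← h]; simp
  · have hba : 0 < b / a := div_pos hb0 ha0
    have h1 : Real.log (b / a) ≤ b / a - 1 := Real.log_le_sub_one_of_pos hba
    have hlog : Real.log (b / a) = -Real.log (a / b) := by
      rw [Real.log_div hb0.ne' ha0.ne', Real.log_div ha0.ne' hb0.ne']; ring
    have h3 : a * (b / a - 1) = b - a := by field_simp
    have h2 : a * Real.log (b / a) ≤ b - a := by
      calc a * Real.log (b / a) ≤ a * (b / a - 1) :=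
            mul_le_mul_of_nonneg_left h1 ha0.le
        _ = b - a := h3
    rw [hlog] at h2
    constructor
    · linarith
    constructor
    · intro h
      by_contra hne
      have hne' : b / a ≠ 1 := by
        intro hh
        apply hne
        field_simp at hh
        linarith
      have hstrict := Real.log_lt_sub_one_of_pos hba hne'
      have : a * Real.log (b / a) < a * (b / a - 1) :=
        mul_lt_mul_of_pos_left hstrict ha0
      rw [hlog, h3] at this
      linarith
    · intro h
      subst h
      rw [div_self ha0.ne', Real.log_one]
      ring

lemma kl_sum {κ : Type*} [Fintype κ] (a b : κ → ℝ) (ha : ∀ j, 0 ≤ a j)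
    (hb : ∀ j, 0 ≤ b j) (h0 : ∀ j, b j = 0 → a j = 0)
    (hsum : ∑ j, a j = ∑ j, b j) :
    0 ≤ ∑ j, a j * Real.log (a j / b j) ∧
      (∑ j, a j * Real.log (a j / b j) = 0 ↔ ∀ j, a j = b j) := by
  have key : ∀ j ∈ Finset.univ, 0 ≤ a j * Real.log (a j / b j) - (a j - b j) :=
    fun j _ => by linarith [(pointwise_kl (a j) (b j) (ha j) (hb j) (h0 j)).1]
  have hsumid : ∑ j, (a j * Real.log (a j / b j) - (a j - b j))
      = ∑ j, a j * Real.log (a j / b j) := by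
    rw [Finset.sum_sub_distrib, Finset.sum_sub_distrib, hsum]; ring
  constructor
  · rw [← hsumid]; exact Finset.sum_nonneg key
  · rw [← hsumid, Finset.sum_eq_zero_iff_of_nonneg key]
    constructor
    · intro h j
      have hj := h j (Finset.mem_univ j)
      exact (pointwise_kl (a j) (b j) (ha j) (hb j) (h0 j)).2.mp (by linarith)
    · intro h j _
      have := (pointwise_kl (a j) (b j) (ha j) (hb j) (h0 j)).2.mpr (h j)
      linarith

/-- Equality in the non-increase theorem: the entropy is unchanged by the added
coarse-graining iff `p_{ij} = (V_{ij}/V_i) p_i` for all `i, j`. -/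
theorem obs_entropy_nonincreasing_equality_iff
    {ι κ : Type*} [Fintype ι] [Fintype κ]
    (p : ι → ℝ) (pp : ι → κ → ℝ) (V : ι → ℝ) (VV : ι → κ → ℝ)
    (hp : ∀ i, 0 ≤ p i) (hpsum : ∑ i, p i = 1)
    (hpp : ∀ i j, 0 ≤ pp i j) (hppsum : ∀ i, ∑ j, pp i j = p i)
    (hVV : ∀ i j, 0 ≤ VV i j) (hVVsum : ∀ i, ∑ j, VV i j = V i)
    (hV : ∀ i, 0 < V i)
    (hV0 : ∀ i j, VV i j = 0 → pp i j = 0) :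
    -∑ i, ∑ j, pp i j * Real.log (pp i j / VV i j)
        = -∑ i, p i * Real.log (p i / V i)
      ↔ ∀ i j, pp i j = (VV i j / V i) * p i := by
  set q : ι → κ → ℝ := fun i j => VV i j / V i * p i with hq
  have hqnn : ∀ i j, 0 ≤ q i j := fun i j =>
    mul_nonneg (div_nonneg (hVV i j) (hV i).le) (hp i)
  have hple : ∀ i j, pp i j ≤ p i := by
    intro i j
    rw [← hppsum i]
    exact Finset.single_le_sum (fun k _ => hpp i k) (Finset.mem_univ j)
  have hq0 : ∀ i j, q i j = 0 → pp i j = 0 := by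
    intro i j hqz
    rcases mul_eq_zero.mp hqz with h | h
    · rcases div_eq_zero_iff.mp h with h | h
      · exact hV0 i j h
      · exact absurd h (hV i).ne'
    · have := hple i j
      have := hpp i j
      linarith
  have hqsum : ∀ i, ∑ j, q i j = p i := by
    intro i
    have : ∑ j, VV i j / V i * p i = (∑ j, VV i j) / V i * p i := by
      rw [← Finset.sum_mul, ← Finset.sum_div]
    rw [hq]
    simp only
    rw [this, hVVsum, div_self (hV i).ne', one_mul]
  have hid : ∀ i j, pp i j * Real.log (pp i j / VV i j)
      = pp i j * Real.log (pp i j / q i j) + pp i j * Real.log (p i / V i) := by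
    intro i j
    rcases eq_or_lt_of_le (hpp i j) with h | h
    · rw [← h]; ring
    · have hVVpos : 0 < VV i j := by
        rcases eq_or_lt_of_le (hVV i j) with h' | h'
        · exact absurd (hV0 i j h'.symm) (by linarith)
        · exact h'
      have hppos : 0 < p i := lt_of_lt_of_le h (hple i j)
      have hqpos : 0 < q i j := mul_pos (div_pos hVVpos (hV i)) hppos
      have h1 : q i j = VV i j * p i / V i := by rw [hq]; ring
      have hsplit : pp i j / VV i j = (pp i j / q i j) * (p i / V i) := by
        rw [h1, div_div_eq_mul_div, div_mul_div_comm,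
          div_eq_div_iff hVVpos.ne' (mul_pos (mul_pos hVVpos hppos) (hV i)).ne']
        ring
      rw [hsplit, Real.log_mul (div_pos h hqpos).ne' (div_pos hppos (hV i)).ne',
        mul_add]
  have hrow : ∀ i, ∑ j, pp i j * Real.log (pp i j / VV i j)
      = (∑ j, pp i j * Real.log (pp i j / q i j)) + p i * Real.log (p i / V i) := by
    intro i
    calc ∑ j, pp i j * Real.log (pp i j / VV i j)
        = ∑ j, (pp i j * Real.log (pp i j / q i j) + pp i j * Real.log (p i / V i)) := by
          exact Finset.sum_congr rfl fun j _ => hid i j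
      _ = (∑ j, pp i j * Real.log (pp i j / q i j))
            + (∑ j, pp i j) * Real.log (p i / V i) := by
          rw [Finset.sum_add_distrib, Finset.sum_mul]
      _ = _ := by rw [hppsum i]
  have hkl := fun i => kl_sum (pp i) (q i) (hpp i) (hqnn i) (hq0 i)
    ((hppsum i).trans (hqsum i).symm)
  have htotal : ∑ i, ∑ j, pp i j * Real.log (pp i j / VV i j)
      = (∑ i, ∑ j, pp i j * Real.log (pp i j / q i j))
        + ∑ i, p i * Real.log (p i / V i) := by
    rw [← Finset.sum_add_distrib]
    exact Finset.sum_congr rfl fun i _ => hrow i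
  rw [htotal]
  have hkey : ∀ i ∈ Finset.univ, 0 ≤ ∑ j, pp i j * Real.log (pp i j / q i j) :=
    fun i _ => (hkl i).1
  constructor
  · intro h
    have hzero : ∑ i, ∑ j, pp i j * Real.log (pp i j / q i j) = 0 := by linarith
    rw [Finset.sum_eq_zero_iff_of_nonneg hkey] at hzero
    intro i j
    exact ((hkl i).2.mp (hzero i (Finset.mem_univ i))) j
  · intro h
    have hzero : ∀ i ∈ Finset.univ, ∑ j, pp i j * Real.log (pp i j / q i j) = 0 :=
      fun i _ => (hkl i).2.mpr (fun j => h i j)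
    rw [Finset.sum_eq_zero (by exact_mod_cast hzero)]
    ring
end

section
/- Observational entropy is monotone under coarsening: if index set J and index sets I^(j) partition the index set I, and q_j = ∑_{i ∈ I^(j)} p_i, W_j = ∑_{i ∈ I^(j)} V_i, then -∑_j q_j ln(q_j/W_j) ≥ -∑_i p_i ln(p_i/V_i), with equality iff for all j and all i ∈ I^(j), p_i = (V_i/W_j) q_j. -/
/-!
Jensen's inequality for the strictly convex `x ↦ x log x`, with weights `V i / W j` at the points
`p i / V i` of a block `g⁻¹' {j}`, is the log-sum inequality
`q j log (q j / W j) ≤ ∑ p i log (p i / V i)`, with equality iff every ratio `p i / V i` equals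
`q j / W j`. Summing over the blocks gives both claims.
-/

open Real Finset

section LogSum

variable {ι : Type*} {s : Finset ι} {p V : ι → ℝ}

lemma sum_div_sum_mul_div_mul (hV : ∀ i ∈ s, V i ≠ 0) (c : ι → ℝ) :
    ∑ i ∈ s, V i / (∑ k ∈ s, V k) * (p i / V i * c i) = (∑ i ∈ s, p i * c i) / ∑ k ∈ s, V k := by
  rw [sum_div]
  refine sum_congr rfl fun i hi => ?_
  field_simp [hV i hi]

lemma sum_div_sum_mul_div (hV : ∀ i ∈ s, V i ≠ 0) :
    ∑ i ∈ s, V i / (∑ k ∈ s, V k) * (p i / V i) = (∑ i ∈ s, p i) / ∑ k ∈ s, V k := by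
  simpa using sum_div_sum_mul_div_mul (p := p) hV 1

lemma sum_div_sum_eq_one (hs : s.Nonempty) (hV : ∀ i ∈ s, 0 < V i) :
    ∑ i ∈ s, V i / ∑ k ∈ s, V k = 1 := by
  rw [← sum_div, div_self (sum_pos hV hs).ne']

theorem sum_mul_log_div_le_sum_mul_log_div (hp : ∀ i ∈ s, 0 ≤ p i) (hV : ∀ i ∈ s, 0 < V i) :
    (∑ i ∈ s, p i) * log ((∑ i ∈ s, p i) / ∑ i ∈ s, V i) ≤ ∑ i ∈ s, p i * log (p i / V i) := by
  obtain rfl | hs := s.eq_empty_or_nonempty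
  · simp
  have hW := sum_pos hV hs
  have hV0 : ∀ i ∈ s, V i ≠ 0 := fun i hi => (hV i hi).ne'
  have jensen := convexOn_mul_log.map_sum_le (t := s) (w := fun i => V i / ∑ k ∈ s, V k)
    (p := fun i => p i / V i) (fun i hi => (div_pos (hV i hi) hW).le) (sum_div_sum_eq_one hs hV)
    (fun i hi => Set.mem_Ici.2 (div_nonneg (hp i hi) (hV i hi).le))
  simp only [smul_eq_mul] at jensen
  rw [sum_div_sum_mul_div hV0, sum_div_sum_mul_div_mul hV0, ← mul_div_right_comm] at jensen
  exact (div_le_div_iff_of_pos_right hW).1 jensen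

theorem sum_mul_log_div_eq_sum_mul_log_div_iff (hp : ∀ i ∈ s, 0 ≤ p i) (hV : ∀ i ∈ s, 0 < V i) :
    (∑ i ∈ s, p i) * log ((∑ i ∈ s, p i) / ∑ i ∈ s, V i) = ∑ i ∈ s, p i * log (p i / V i) ↔
      ∀ i ∈ s, p i = V i / (∑ k ∈ s, V k) * ∑ k ∈ s, p k := by
  obtain rfl | hs := s.eq_empty_or_nonempty
  · simp
  have hW := sum_pos hV hs
  have hV0 : ∀ i ∈ s, V i ≠ 0 := fun i hi => (hV i hi).ne'
  have jensen := strictConvexOn_mul_log.map_sum_eq_iff (t := s)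
    (w := fun i => V i / ∑ k ∈ s, V k) (p := fun i => p i / V i)
    (fun i hi => div_pos (hV i hi) hW) (sum_div_sum_eq_one hs hV)
    (fun i hi => Set.mem_Ici.2 (div_nonneg (hp i hi) (hV i hi).le))
  simp only [smul_eq_mul] at jensen
  rw [sum_div_sum_mul_div hV0, sum_div_sum_mul_div_mul hV0, ← mul_div_right_comm,
    div_left_inj' hW.ne'] at jensen
  rw [jensen]
  refine forall₂_congr fun i hi => ?_
  rw [div_eq_iff (hV0 i hi), div_mul_comm]

end LogSum

theorem obs_entropy_monotone_coarsening_general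
    {ι J : Type*} [Fintype ι] [Fintype J] [DecidableEq J]
    (p V : ι → ℝ) (hp : ∀ i, 0 ≤ p i)
    (hV : ∀ i, 0 < V i)
    (g : ι → J) (q W : J → ℝ)
    (hq : ∀ j, q j = ∑ i ∈ Finset.univ.filter (g · = j), p i)
    (hW : ∀ j, W j = ∑ i ∈ Finset.univ.filter (g · = j), V i) :
    (-∑ i, p i * Real.log (p i / V i) ≤ -∑ j, q j * Real.log (q j / W j)) ∧
      (-∑ i, p i * Real.log (p i / V i) = -∑ j, q j * Real.log (q j / W j)
        ↔ ∀ j, ∀ i, g i = j → p i = (V i / W j) * q j) := by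
  have hblock (j : J) (_ : j ∈ univ) :
      q j * log (q j / W j) ≤ ∑ i ∈ univ.filter (g · = j), p i * log (p i / V i) := by
    rw [hq, hW]
    exact sum_mul_log_div_le_sum_mul_log_div (fun i _ => hp i) (fun i _ => hV i)
  rw [← sum_fiberwise univ g, neg_le_neg_iff, neg_inj, eq_comm, sum_eq_sum_iff_of_le hblock]
  refine ⟨sum_le_sum hblock, forall_congr' fun j => ?_⟩
  rw [hq, hW, sum_mul_log_div_eq_sum_mul_log_div_iff (fun i _ => hp i) (fun i _ => hV i)]
  simp only [mem_univ, mem_filter, true_and, forall_const]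

/-- Observational entropy is monotone under coarsening: if the outcomes are grouped by
`g : ι → J` with `q j = ∑_{g i = j} p i` and `W j = ∑_{g i = j} V i`, then
`-∑ q ln(q/W) ≥ -∑ p ln(p/V)`, with equality iff `p i = (V i / W (g i)) * q (g i)` for
all `i` (i.e. for all `j` and all `i` in the block of `j`). -/
theorem obs_entropy_monotone_coarsening
    {ι J : Type*} [Fintype ι] [Fintype J] [DecidableEq J]
    (p V : ι → ℝ) (hp : ∀ i, 0 ≤ p i) (hpsum : ∑ i, p i = 1)
    (hV : ∀ i, 0 < V i)
    (g : ι → J) (q W : J → ℝ)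
    (hq : ∀ j, q j = ∑ i ∈ Finset.univ.filter (g · = j), p i)
    (hW : ∀ j, W j = ∑ i ∈ Finset.univ.filter (g · = j), V i) :
    (-∑ i, p i * Real.log (p i / V i) ≤ -∑ j, q j * Real.log (q j / W j)) ∧
      (-∑ i, p i * Real.log (p i / V i) = -∑ j, q j * Real.log (q j / W j)
        ↔ ∀ j, ∀ i, g i = j → p i = (V i / W j) * q j) :=
  obs_entropy_monotone_coarsening_general p V hp hV g q W hq hW
end

section
/- Two definitions of finer coarse-graining coincide for projective coarse-grainings: given orthogonal projective coarse-grainings C_1,...,C_n with sequential operations A_i = P_{i_n}···P_{i_1}(·)P_{i_1}···P_{i_n} and a projective coarse-graining {P_j}, the condition 'for every multi-index i there exists j with P_{i_n}···P_{i_1}P_j = P_{i_n}···P_{i_1}' holds if and only if each Π_j = P_j can be written as ∑_{i∈I^(j)} P_{i_1}···P_{i_n}···P_{i_1} for disjoint index sets I^(j) partitioning the multi-indices. -/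
open scoped Matrix ComplexOrder

lemma trace_cmsa_nonneg {d : Type*} [Fintype d] (A : Matrix d d ℂ) :
    0 ≤ (Aᴴ * A).trace := by
  rw [Matrix.trace]
  refine Finset.sum_nonneg fun j _ => ?_
  simp only [Matrix.diag_apply, Matrix.mul_apply, Matrix.conjTranspose_apply]
  exact Finset.sum_nonneg fun i _ => star_mul_self_nonneg _

lemma trace_cmsa_eq_zero {d : Type*} [Fintype d] {A : Matrix d d ℂ}
    (h : (Aᴴ * A).trace = 0) : A = 0 := by
  have h2 : ∀ j ∈ Finset.univ, (Aᴴ * A).diag j = 0 := by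
    rw [Matrix.trace] at h
    refine (Finset.sum_eq_zero_iff_of_nonneg fun j _ => ?_).mp h
    simp only [Matrix.diag_apply, Matrix.mul_apply, Matrix.conjTranspose_apply]
    exact Finset.sum_nonneg fun i _ => star_mul_self_nonneg _
  ext i j
  have := h2 j (Finset.mem_univ j)
  simp only [Matrix.diag_apply, Matrix.mul_apply, Matrix.conjTranspose_apply] at this
  have h3 := (Finset.sum_eq_zero_iff_of_nonneg
    (fun i _ => star_mul_self_nonneg (A i j))).mp this i (Finset.mem_univ i)
  have : A i j = 0 := by
    have := congrArg Complex.normSq (by simpa [Complex.star_def, Complex.mul_conj'] using h3 : (starRingEnd ℂ) (A i j) * A i j = 0)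
    simpa [Complex.normSq_eq_zero] using by
      simpa [Complex.mul_conj'] using h3
  simpa using this

lemma sum_kraus {d : Type*} [Fintype d] [DecidableEq d] :
    ∀ (n : ℕ) (κ : Fin n → Type*) [∀ k, Fintype (κ k)] (P : ∀ k, κ k → Matrix d d ℂ),
    (∀ k i, (P k i).IsHermitian) → (∀ k i, P k i * P k i = P k i) → (∀ k, ∑ i, P k i = 1) →
    ∑ i : (∀ k, κ k), ((List.ofFn fun k => P k (i k)).reverse.prod)ᴴ *
      (List.ofFn fun k => P k (i k)).reverse.prod = 1 := by
  intro n
  induction n with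
  | zero =>
    intro κ _ P _ _ _
    simp [List.ofFn_zero]
  | succ n ih =>
    intro κ _ P hherm hproj hcomp
    have key := ih (fun k => κ k.succ) (fun k => P k.succ) (fun k i => hherm k.succ i)
      (fun k i => hproj k.succ i) (fun k => hcomp k.succ)
    rw [← Fintype.sum_equiv (Fin.consEquiv κ)
      (fun p => ((List.ofFn fun k => P k ((Fin.consEquiv κ) p k)).reverse.prod)ᴴ *
        (List.ofFn fun k => P k ((Fin.consEquiv κ) p k)).reverse.prod)
      (fun i => ((List.ofFn fun k => P k (i k)).reverse.prod)ᴴ *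
        (List.ofFn fun k => P k (i k)).reverse.prod) (fun p => rfl)]
    rw [Fintype.sum_prod_type]
    have hlist : ∀ (a : κ 0) (t : ∀ k : Fin n, κ k.succ),
        (List.ofFn fun k => P k ((Fin.consEquiv κ) (a, t) k)).reverse.prod =
        (List.ofFn fun k => P k.succ (t k)).reverse.prod * P 0 a := by
      intro a t
      rw [List.ofFn_succ]
      simp [Fin.consEquiv, List.prod_append]
    calc ∑ a : κ 0, ∑ t : ∀ k : Fin n, κ k.succ,
          ((List.ofFn fun k => P k ((Fin.consEquiv κ) (a, t) k)).reverse.prod)ᴴ *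
          (List.ofFn fun k => P k ((Fin.consEquiv κ) (a, t) k)).reverse.prod
        = ∑ a : κ 0, (P 0 a)ᴴ * (∑ t : ∀ k : Fin n, κ k.succ,
            ((List.ofFn fun k => P k.succ (t k)).reverse.prod)ᴴ *
            (List.ofFn fun k => P k.succ (t k)).reverse.prod) * P 0 a := by
          refine Finset.sum_congr rfl fun a _ => ?_
          rw [Finset.mul_sum, Finset.sum_mul]
          refine Finset.sum_congr rfl fun t _ => ?_
          rw [hlist a t, Matrix.conjTranspose_mul]
          noncomm_ring
      _ = ∑ a : κ 0, P 0 a := by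
          refine Finset.sum_congr rfl fun a _ => ?_
          rw [key, mul_one, (hherm 0 a).eq, hproj 0 a]
      _ = 1 := hcomp 0

/-- Equivalence of the two definitions of "finer vector of coarse-grainings" for
projective coarse-grainings: with `K i = P_{i_n} ⋯ P_{i_1}` the sequential product of
projectors, the old condition (for every multi-index `i` there is `j` with
`K i * Pj j = K i`) holds iff each `Pj j` decomposes as a sum of the POVM elements
`(K i)ᴴ * K i` over a block of a partition of the multi-indices. -/
theorem finer_definitions_equivalent
    {d : Type*} [Fintype d] [DecidableEq d]
    {n : ℕ} {κ : Fin n → Type*} [∀ k, Fintype (κ k)] [∀ k, DecidableEq (κ k)]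
    {J : Type*} [Fintype J] [DecidableEq J]
    (P : ∀ k, κ k → Matrix d d ℂ)
    (hherm : ∀ k i, (P k i).IsHermitian)
    (hproj : ∀ k i, P k i * P k i = P k i)
    (horth : ∀ k i i', i ≠ i' → P k i * P k i' = 0)
    (hcomp : ∀ k, ∑ i, P k i = 1)
    (Pj : J → Matrix d d ℂ)
    (hjherm : ∀ j, (Pj j).IsHermitian)
    (hjproj : ∀ j, Pj j * Pj j = Pj j)
    (hjorth : ∀ j j', j ≠ j' → Pj j * Pj j' = 0)
    (hjcomp : ∑ j, Pj j = 1)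
    (K : (∀ k, κ k) → Matrix d d ℂ)
    (hK : ∀ i, K i = (List.ofFn fun k => P k (i k)).reverse.prod) :
    (∀ i, ∃ j, K i * Pj j = K i) ↔
      ∃ f : (∀ k, κ k) → J, ∀ j,
        Pj j = ∑ i ∈ Finset.univ.filter (f · = j), (K i)ᴴ * K i := by
  have hK1 : ∑ i, (K i)ᴴ * K i = 1 := by
    have := sum_kraus n κ P hherm hproj hcomp
    simpa only [← hK] using this
  constructor
  · intro h
    refine ⟨fun i => (h i).choose, fun j => ?_⟩
    have key : ∀ i, (K i)ᴴ * K i * Pj j =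
        if (h i).choose = j then (K i)ᴴ * K i else 0 := by
      intro i
      by_cases hij : (h i).choose = j
      · rw [if_pos hij, mul_assoc, ← hij, (h i).choose_spec]
      · rw [if_neg hij, mul_assoc, ← (h i).choose_spec, mul_assoc,
          hjorth _ _ hij, mul_zero, mul_zero]
    calc Pj j = (∑ i, (K i)ᴴ * K i) * Pj j := by rw [hK1, one_mul]
      _ = ∑ i, (K i)ᴴ * K i * Pj j := Finset.sum_mul _ _ _
      _ = ∑ i, if (h i).choose = j then (K i)ᴴ * K i else 0 :=
          Finset.sum_congr rfl fun i _ => key i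
      _ = ∑ i ∈ Finset.univ.filter (fun i => (h i).choose = j), (K i)ᴴ * K i :=
          (Finset.sum_filter _ _).symm
  · rintro ⟨f, hf⟩ i
    refine ⟨f i, ?_⟩
    have hzero : ∀ j', j' ≠ f i → K i * Pj j' = 0 := by
      intro j' hj'
      have htr : ∀ i', ((K i' * Pj j')ᴴ * (K i' * Pj j')).trace =
          ((K i')ᴴ * K i' * Pj j').trace := by
        intro i'
        rw [Matrix.conjTranspose_mul, (hjherm j').eq]
        calc (Pj j' * (K i')ᴴ * (K i' * Pj j')).trace
            = (Pj j' * ((K i')ᴴ * K i') * Pj j').trace := by noncomm_ring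
          _ = (Pj j' * Pj j' * ((K i')ᴴ * K i')).trace := by
              rw [Matrix.trace_mul_cycle]
          _ = ((K i')ᴴ * K i' * Pj j').trace := by
              rw [hjproj j', Matrix.trace_mul_comm]
      have hsum0 : ∑ i' ∈ Finset.univ.filter (f · = f i),
          ((K i')ᴴ * K i' * Pj j').trace = 0 := by
        rw [← Matrix.trace_sum, ← Finset.sum_mul, ← hf (f i),
          hjorth (f i) j' (Ne.symm hj'), Matrix.trace_zero]
      have hmem : i ∈ Finset.univ.filter (f · = f i) := by simp
      have hterm : ((K i)ᴴ * K i * Pj j').trace = 0 := by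
        refine (Finset.sum_eq_zero_iff_of_nonneg fun i' _ => ?_).mp hsum0 i hmem
        rw [← htr i']
        exact trace_cmsa_nonneg _
      exact trace_cmsa_eq_zero (by rw [htr i, hterm])
    symm
    calc K i = K i * (∑ j, Pj j) := by rw [hjcomp, mul_one]
      _ = ∑ j, K i * Pj j := Finset.mul_sum _ _ _
      _ = K i * Pj (f i) := Finset.sum_eq_single _ (fun j _ hj => hzero j hj)
          (fun h => absurd (Finset.mem_univ _) h)
  -- done
end

section
/- If the sequence of quantum operations projects onto a pure state, i.e., for every density matrix ρ and every outcome i with p_i ≠ 0, A_i(ρ)/tr(A_i(ρ)) = |ψ_i⟩⟨ψ_i| with ψ_i independent of ρ, then adding any further coarse-graining leaves observational entropy unchanged: S_{C,C_{n+1}}(ρ) = S_C(ρ). -/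
open scoped Matrix ComplexOrder

/-!
Each `A i` maps every state into the ray spanned by the fixed projector `P i = |ψ i⟩⟨ψ i|`;
by linearity this holds for every positive semidefinite matrix, in particular for `ρ` and for
the identity. Hence `A i ρ = p i • P i` and `A i 1 = V i • P i`, so the finer probabilities and
volumes `p i j = p i q i j` and `V i j = V i q i j` share the factor `q i j = tr (B j (P i))`,
every ratio `p i j / V i j` equals `p i / V i`, and summing over `j` with `∑ j, p i j = p i`
gives back the coarser entropy.
-/

namespace Matrix

section

variable {𝕜 d : Type*} [RCLike 𝕜] [Fintype d]

lemma map_eq_trace_smul_of_forall_trace_eq_one {Φ : Matrix d d 𝕜 →ₗ[𝕜] Matrix d d 𝕜}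
    (hΦ : ∀ X : Matrix d d 𝕜, X.PosSemidef → (Φ X).PosSemidef) {P : Matrix d d 𝕜}
    (hP : ∀ σ : Matrix d d 𝕜, σ.PosSemidef → σ.trace = 1 → (Φ σ).trace ≠ 0 →
      Φ σ = (Φ σ).trace • P)
    {X : Matrix d d 𝕜} (hX : X.PosSemidef) : Φ X = (Φ X).trace • P := by
  by_cases hΦX : (Φ X).trace = 0
  · rw [hΦX, zero_smul]
    exact (hΦ X hX).trace_eq_zero_iff.mp hΦX
  have hX0 : X.trace ≠ 0 := fun h => hΦX <| by
    rw [hX.trace_eq_zero_iff.mp h, map_zero, trace_zero]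
  set σ := X.trace⁻¹ • X
  have hσ : σ.PosSemidef := hX.smul (inv_nonneg_of_nonneg hX.trace_nonneg)
  have hσ1 : σ.trace = 1 := by rw [trace_smul, smul_eq_mul, inv_mul_cancel₀ hX0]
  have hΦXσ : Φ X = X.trace • Φ σ := by
    rw [← map_smul, smul_smul, mul_inv_cancel₀ hX0, one_smul]
  have hΦσ : (Φ σ).trace ≠ 0 := by
    rw [hΦXσ, trace_smul, smul_eq_mul] at hΦX
    exact right_ne_zero_of_mul hΦX
  calc Φ X = X.trace • Φ σ := hΦXσ
    _ = (X.trace * (Φ σ).trace) • P := by rw [mul_smul, ← hP σ hσ hσ1 hΦσ]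
    _ = (Φ X).trace • P := by rw [hΦXσ, trace_smul, smul_eq_mul]

variable {M : Type*} [Fintype M]

def krausMap (K : M → Matrix d d 𝕜) : Matrix d d 𝕜 →ₗ[𝕜] Matrix d d 𝕜 where
  toFun X := ∑ m, K m * X * (K m)ᴴ
  map_add' X Y := by simp only [mul_add, add_mul, Finset.sum_add_distrib]
  map_smul' c X := by
    simp only [Matrix.mul_smul, Matrix.smul_mul, Finset.smul_sum, RingHom.id_apply]

lemma krausMap_apply (K : M → Matrix d d 𝕜) (X : Matrix d d 𝕜) :
    krausMap K X = ∑ m, K m * X * (K m)ᴴ :=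
  rfl

lemma PosSemidef.krausMap (K : M → Matrix d d 𝕜) {X : Matrix d d 𝕜} (hX : X.PosSemidef) :
    (krausMap K X).PosSemidef :=
  posSemidef_sum _ fun m _ => hX.mul_mul_conjTranspose_same (K m)

lemma sum_trace_krausMap {κ : Type*} [Fintype κ] [DecidableEq d]
    (L : κ → M → Matrix d d 𝕜) (hL : ∑ j, ∑ m, (L j m)ᴴ * L j m = 1) (X : Matrix d d 𝕜) :
    ∑ j, (krausMap (L j) X).trace = X.trace := by
  simp_rw [krausMap_apply, trace_sum, trace_mul_cycle _ X, ← trace_sum, ← Finset.sum_mul, hL,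
    one_mul]

end

section

variable {d : Type*} [Fintype d]

lemma PosSemidef.ofReal_re_trace {X : Matrix d d ℂ} (hX : X.PosSemidef) :
    (X.trace.re : ℂ) = X.trace :=
  (Complex.eq_re_of_ofReal_le (r := 0) (by simpa using hX.trace_nonneg)).symm

lemma re_trace_map_of_eq_trace_smul (Φ : Matrix d d ℂ →ₗ[ℂ] Matrix d d ℂ)
    {X P : Matrix d d ℂ} (hX : X.PosSemidef) (hXP : X = X.trace • P) :
    (Φ X).trace.re = X.trace.re * (Φ P).trace.re := by
  conv_lhs => rw [hXP, map_smul, trace_smul, smul_eq_mul, ← hX.ofReal_re_trace,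
    Complex.re_ofReal_mul]

end

end Matrix

lemma Real.mul_mul_log_mul_div_mul_right (p V q : ℝ) :
    p * q * Real.log (p * q / (V * q)) = p * q * Real.log (p / V) := by
  rcases eq_or_ne q 0 with rfl | hq
  · simp
  · rw [mul_div_mul_right _ _ hq]

open Matrix

theorem pure_projection_additional_cg_no_change_general
    {d ι κ M M' : Type*} [Fintype d] [DecidableEq d]
    [Fintype ι] [Fintype κ] [Fintype M] [Fintype M']
    (K : ι → M → Matrix d d ℂ)
    (L : κ → M' → Matrix d d ℂ)
    (hLcomp : ∑ j, ∑ m, (L j m)ᴴ * L j m = (1 : Matrix d d ℂ))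
    (A : ι → Matrix d d ℂ → Matrix d d ℂ)
    (B : κ → Matrix d d ℂ → Matrix d d ℂ)
    (hA : ∀ i X, A i X = ∑ m, K i m * X * (K i m)ᴴ)
    (hB : ∀ j X, B j X = ∑ m, L j m * X * (L j m)ᴴ)
    (ψ : ι → d → ℂ)
    (hpure : ∀ σ : Matrix d d ℂ, σ.PosSemidef → σ.trace = 1 →
      ∀ i, (A i σ).trace ≠ 0 →
        A i σ = (A i σ).trace • Matrix.vecMulVec (ψ i) (star (ψ i)))
    (ρ : Matrix d d ℂ) (hρ : ρ.PosSemidef) :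
    -∑ i, ∑ j, (B j (A i ρ)).trace.re *
        Real.log ((B j (A i ρ)).trace.re / (B j (A i 1)).trace.re)
      = -∑ i, (A i ρ).trace.re * Real.log ((A i ρ).trace.re / (A i 1).trace.re) := by
  obtain rfl : A = fun i => ⇑(krausMap (K i)) := funext fun i => funext (hA i)
  obtain rfl : B = fun j => ⇑(krausMap (L j)) := funext fun j => funext (hB j)
  beta_reduce
  congr 1
  refine Finset.sum_congr rfl fun i _ => ?_
  have hproj {X : Matrix d d ℂ} (hX : X.PosSemidef) := map_eq_trace_smul_of_forall_trace_eq_one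
    (fun Y hY => hY.krausMap (K i)) (fun σ hσ hσ1 => hpure σ hσ hσ1 i) hX
  have hpij := fun j => re_trace_map_of_eq_trace_smul (krausMap (L j)) (hρ.krausMap (K i))
    (hproj hρ)
  have hVij := fun j => re_trace_map_of_eq_trace_smul (krausMap (L j))
    (PosSemidef.one.krausMap (K i)) (hproj PosSemidef.one)
  have hsum : ∑ j, (krausMap (K i) ρ).trace.re *
      (krausMap (L j) (vecMulVec (ψ i) (star (ψ i)))).trace.re =
      (krausMap (K i) ρ).trace.re := by
    simp_rw [← hpij, ← Complex.re_sum, sum_trace_krausMap L hLcomp]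
  simp_rw [hpij, hVij, Real.mul_mul_log_mul_div_mul_right]
  rw [← Finset.sum_mul, hsum]

/-- If the quantum operations `A i` (given in Kraus form) project onto pure states
(for every density matrix `σ` and outcome `i` with nonzero probability,
`A i σ / tr (A i σ)` is a fixed pure state `|ψ i⟩⟨ψ i|` independent of `σ`), then adding
any further coarse-graining `B j` leaves the observational entropy unchanged. -/
theorem pure_projection_additional_cg_no_change
    {d ι κ M M' : Type*} [Fintype d] [DecidableEq d]
    [Fintype ι] [Fintype κ] [Fintype M] [Fintype M']
    (K : ι → M → Matrix d d ℂ)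
    (L : κ → M' → Matrix d d ℂ)
    (hKcomp : ∑ i, ∑ m, (K i m)ᴴ * K i m = (1 : Matrix d d ℂ))
    (hLcomp : ∑ j, ∑ m, (L j m)ᴴ * L j m = (1 : Matrix d d ℂ))
    (A : ι → Matrix d d ℂ → Matrix d d ℂ)
    (B : κ → Matrix d d ℂ → Matrix d d ℂ)
    (hA : ∀ i X, A i X = ∑ m, K i m * X * (K i m)ᴴ)
    (hB : ∀ j X, B j X = ∑ m, L j m * X * (L j m)ᴴ)
    (ψ : ι → d → ℂ)
    (hpure : ∀ σ : Matrix d d ℂ, σ.PosSemidef → σ.trace = 1 →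
      ∀ i, (A i σ).trace ≠ 0 →
        A i σ = (A i σ).trace • Matrix.vecMulVec (ψ i) (star (ψ i)))
    (ρ : Matrix d d ℂ) (hρ : ρ.PosSemidef) (hρ1 : ρ.trace = 1) :
    -∑ i, ∑ j, (B j (A i ρ)).trace.re *
        Real.log ((B j (A i ρ)).trace.re / (B j (A i 1)).trace.re)
      = -∑ i, (A i ρ).trace.re * Real.log ((A i ρ).trace.re / (A i 1).trace.re) :=
  pure_projection_additional_cg_no_change_general K L hLcomp A B hA hB ψ hpure ρ hρ
end

section
/- For the single von Neumann measurement with Gaussian pointer, the observational entropy S^sm = -∫ p_x ln(p_x/V_x) dx, with p_x = ∑_μ p_μ g_Ω(x−κμ) and V_x = ∑_μ V_μ g_Ω(x−κμ), satisfies S^pm ≤ S^sm, where S^pm = -∑_μ p_μ ln(p_μ/V_μ). -/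
open MeasureTheory

/-- The Gaussian density with mean `0` and standard deviation `Ω`. -/
noncomputable def gaussianDensity (Ω x : ℝ) : ℝ :=
  (Real.sqrt (2 * Real.pi * Ω ^ 2))⁻¹ * Real.exp (-(x ^ 2) / (2 * Ω ^ 2))

/-!
Pointwise in `x`, the log-sum inequality for the weights `p_μ g_Ω(x - κμ)` and `V_μ g_Ω(x - κμ)`
bounds the integrand `p_x ln (p_x / V_x)` by `∑_μ p_μ ln (p_μ / V_μ) g_Ω(x - κμ)`, and each
Gaussian integrates to `1`. This is the data-processing inequality for relative entropy under
the channel `μ ↦ g_Ω(· - κμ)`. The integrand is integrable because it is squeezed between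
`p_x - V_x` and that upper bound.
-/

open Real Finset ProbabilityTheory
open scoped NNReal

lemma sub_le_mul_log_div {a b : ℝ} (ha : 0 ≤ a) (hb : 0 < b) : a - b ≤ a * log (a / b) := by
  have h := mul_nonneg hb.le (InformationTheory.klFun_nonneg (div_nonneg ha hb.le))
  rw [InformationTheory.klFun, mul_sub, mul_add, ← mul_assoc, mul_div_cancel₀ _ hb.ne'] at h
  linarith

lemma sum_mul_log_sum_div_sum_le {ι : Type*} {s : Finset ι} {a b : ι → ℝ}
    (ha : ∀ i ∈ s, 0 ≤ a i) (hb : ∀ i ∈ s, 0 < b i) :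
    (∑ i ∈ s, a i) * log ((∑ i ∈ s, a i) / ∑ i ∈ s, b i) ≤ ∑ i ∈ s, a i * log (a i / b i) := by
  rcases s.eq_empty_or_nonempty with rfl | hs
  · simp
  have hB : 0 < ∑ i ∈ s, b i := sum_pos hb hs
  -- Jensen for `x ln x` with weights `b i` at the points `a i / b i`.
  have jensen := convexOn_mul_log.map_centerMass_le (fun i hi => (hb i hi).le) hB
    (p := fun i => a i / b i) fun i hi => Set.mem_Ici.2 (div_nonneg (ha i hi) (hb i hi).le)
  have hcancel : ∀ i ∈ s, b i * (a i / b i) = a i := fun i hi => mul_div_cancel₀ _ (hb i hi).ne'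
  simp only [centerMass, Function.comp_def, smul_eq_mul, ← mul_assoc, sum_congr rfl hcancel]
    at jensen
  have hsum : ∑ i ∈ s, b i * (a i / b i) * log (a i / b i) = ∑ i ∈ s, a i * log (a i / b i) :=
    sum_congr rfl fun i hi => by rw [hcancel i hi]
  rw [hsum] at jensen
  set A := ∑ i ∈ s, a i
  set B := ∑ i ∈ s, b i
  calc A * log (A / B) = B * (B⁻¹ * A * log (B⁻¹ * A)) := by
        rw [inv_mul_eq_div]; field_simp
    _ ≤ B * (B⁻¹ * ∑ i ∈ s, a i * log (a i / b i)) := mul_le_mul_of_nonneg_left jensen hB.le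
    _ = ∑ i ∈ s, a i * log (a i / b i) := by field_simp

section Mixture

variable {X ι : Type*} [Fintype ι] {g : ι → X → ℝ} {p V : ι → ℝ}

lemma mixture_mul_log_div_le (hg : ∀ i x, 0 < g i x) (hp : ∀ i, 0 ≤ p i) (hV : ∀ i, 0 < V i)
    (x : X) :
    (∑ i, p i * g i x) * log ((∑ i, p i * g i x) / ∑ i, V i * g i x)
      ≤ ∑ i, p i * log (p i / V i) * g i x := by
  refine (sum_mul_log_sum_div_sum_le (fun i _ => mul_nonneg (hp i) (hg i x).le)
    fun i _ => mul_pos (hV i) (hg i x)).trans_eq (sum_congr rfl fun i _ => ?_)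
  rw [mul_div_mul_right _ _ (hg i x).ne']
  ring

variable [MeasurableSpace X] {ν : Measure X}

lemma integrable_mixture_mul_log_div (hg : ∀ i x, 0 < g i x) (hg_int : ∀ i, Integrable (g i) ν)
    (hp : ∀ i, 0 ≤ p i) (hV : ∀ i, 0 < V i) :
    Integrable (fun x => (∑ i, p i * g i x) * log ((∑ i, p i * g i x) / ∑ i, V i * g i x)) ν := by
  rcases isEmpty_or_nonempty ι with _ | _
  · simp
  have hmix : ∀ c : ι → ℝ, Integrable (fun x => ∑ i, c i * g i x) ν :=
    fun c => integrable_finsetSum _ fun i _ => (hg_int i).const_mul _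
  have hmeas : ∀ i, AEMeasurable (g i) ν := fun i => (hg_int i).aemeasurable
  refine integrable_of_le_of_le (by fun_prop) (.of_forall fun x => sub_le_mul_log_div ?_ ?_)
    (.of_forall (mixture_mul_log_div_le hg hp hV)) ((hmix p).sub (hmix V)) (hmix _)
  · exact sum_nonneg fun i _ => mul_nonneg (hp i) (hg i x).le
  · exact sum_pos (fun i _ => mul_pos (hV i) (hg i x)) univ_nonempty

theorem integral_mixture_mul_log_div_le (hg : ∀ i x, 0 < g i x)
    (hg_int : ∀ i, Integrable (g i) ν) (hg_one : ∀ i, ∫ x, g i x ∂ν = 1)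
    (hp : ∀ i, 0 ≤ p i) (hV : ∀ i, 0 < V i) :
    ∫ x, (∑ i, p i * g i x) * log ((∑ i, p i * g i x) / ∑ i, V i * g i x) ∂ν
      ≤ ∑ i, p i * log (p i / V i) := by
  have hterm : ∀ i, Integrable (fun x => p i * log (p i / V i) * g i x) ν :=
    fun i => (hg_int i).const_mul _
  calc _ ≤ ∫ x, ∑ i, p i * log (p i / V i) * g i x ∂ν :=
        integral_mono (integrable_mixture_mul_log_div hg hg_int hp hV)
          (integrable_finsetSum _ fun i _ => hterm i) (mixture_mul_log_div_le hg hp hV)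
    _ = ∑ i, p i * log (p i / V i) := by
        simp only [integral_finsetSum _ fun i _ => hterm i, integral_const_mul, hg_one, mul_one]

end Mixture

lemma gaussianDensity_sub_eq_gaussianPDFReal (Ω m x : ℝ) :
    gaussianDensity Ω (x - m) = gaussianPDFReal m ⟨Ω ^ 2, sq_nonneg Ω⟩ x :=
  rfl

theorem projective_entropy_le_single_measurement_entropy_general
    {ι : Type*} [Fintype ι]
    (μ : ι → ℝ)
    (p V : ι → ℝ)
    (hp : ∀ i, 0 ≤ p i)
    (hV : ∀ i, 0 < V i)
    (Ω κ : ℝ) (hΩ : 0 < Ω) :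
    -∑ i, p i * Real.log (p i / V i)
      ≤ -∫ x : ℝ,
          (∑ i, p i * gaussianDensity Ω (x - κ * μ i)) *
            Real.log ((∑ i, p i * gaussianDensity Ω (x - κ * μ i)) /
              (∑ i, V i * gaussianDensity Ω (x - κ * μ i))) := by
  have hv : (⟨Ω ^ 2, sq_nonneg Ω⟩ : ℝ≥0) ≠ 0 := by
    simpa [← NNReal.coe_ne_zero] using hΩ.ne'
  simp only [gaussianDensity_sub_eq_gaussianPDFReal]
  exact neg_le_neg <| integral_mixture_mul_log_div_le (fun i x => gaussianPDFReal_pos _ _ x hv)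
    (fun i => integrable_gaussianPDFReal _ _) (fun i => integral_gaussianPDFReal_eq_one _ hv) hp hV

/-- For the single von Neumann measurement with a Gaussian pointer, the observational
entropy `S^sm = -∫ p_x ln (p_x / V_x) dx`, with `p_x = ∑ μ, p μ * g_Ω (x - κ μ)` and
`V_x = ∑ μ, V μ * g_Ω (x - κ μ)`, dominates the projective-measurement entropy
`S^pm = -∑ μ, p μ ln (p μ / V μ)`. -/
theorem projective_entropy_le_single_measurement_entropy
    {ι : Type*} [Fintype ι]
    (μ : ι → ℝ) (hμ : Function.Injective μ)
    (p V : ι → ℝ)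
    (hp : ∀ i, 0 ≤ p i) (hpsum : ∑ i, p i = 1)
    (hV : ∀ i, 0 < V i)
    (Ω κ : ℝ) (hΩ : 0 < Ω) :
    -∑ i, p i * Real.log (p i / V i)
      ≤ -∫ x : ℝ,
          (∑ i, p i * gaussianDensity Ω (x - κ * μ i)) *
            Real.log ((∑ i, p i * gaussianDensity Ω (x - κ * μ i)) /
              (∑ i, V i * gaussianDensity Ω (x - κ * μ i))) :=
  projective_entropy_le_single_measurement_entropy_general μ p V hp hV Ω κ hΩ
end
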